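/- arXiv:1607.08295 — 2 statements merged into one kernel-verified Lean document; each statement's English description precedes it below -/
import Mathlib

section
/- Representation formula: the unique fixed point u_λ of g ↦ T_λ(g) + β satisfies u_λ(x) = min over backward sequences (x_{-n})_{n≥0} with x_0 = x of Σ_{n=0}^∞ λⁿ (c(x_{-n-1}, x_{-n}) + β), and the minimum is attained. -/
/-!
Along any backward sequence `q` the Bellman inequality `u (q n) ≤ λ u (q (n+1)) + c (q (n+1), q n) + β`
telescopes to `u x ≤ ∑_{n<N} λⁿ (c (q (n+1), q n) + β) + λᴺ u (q N)`, and the remainder `λᴺ u (q N)`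
vanishes because `u` is bounded. Choosing at each step a minimiser of `y ↦ λ u y + c (y, ·)` (it exists by
compactness) turns every inequality into an equality, which gives an optimal sequence.
-/

open Filter Topology Finset

section Discounted

variable {lam : ℝ} {v a : ℕ → ℝ}

lemma summable_pow_mul_of_norm_le (hlam0 : 0 ≤ lam) (hlam1 : lam < 1) {C : ℝ}
    (ha : ∀ n, ‖a n‖ ≤ C) : Summable fun n => lam ^ n * a n :=
  ((summable_geometric_of_lt_one hlam0 hlam1).mul_right C).of_norm_bounded fun n => by
    rw [norm_mul, norm_pow, Real.norm_of_nonneg hlam0]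
    exact mul_le_mul_of_nonneg_left (ha n) (pow_nonneg hlam0 n)

lemma tendsto_pow_mul_of_norm_le (hlam0 : 0 ≤ lam) (hlam1 : lam < 1) {C : ℝ}
    (hv : ∀ n, ‖v n‖ ≤ C) : Tendsto (fun n => lam ^ n * v n) atTop (𝓝 0) :=
  (tendsto_pow_atTop_nhds_zero_of_lt_one hlam0 hlam1).zero_mul_isBoundedUnder_le
    (isBoundedUnder_of ⟨C, hv⟩)

lemma le_sum_range_add_pow_mul (hlam0 : 0 ≤ lam) (hv : ∀ n, v n ≤ lam * v (n + 1) + a n)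
    (N : ℕ) : v 0 ≤ ∑ n ∈ range N, lam ^ n * a n + lam ^ N * v N := by
  induction N with
  | zero => simp
  | succ N ih =>
    calc v 0 ≤ ∑ n ∈ range N, lam ^ n * a n + lam ^ N * v N := ih
      _ ≤ ∑ n ∈ range N, lam ^ n * a n + lam ^ N * (lam * v (N + 1) + a N) := by
        gcongr
        exact hv N
      _ = ∑ n ∈ range (N + 1), lam ^ n * a n + lam ^ (N + 1) * v (N + 1) := by
        rw [sum_range_succ]; ring

lemma le_tsum_of_le_discounted (hlam0 : 0 ≤ lam) (hlam1 : lam < 1) {Cv Ca : ℝ}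
    (hv : ∀ n, v n ≤ lam * v (n + 1) + a n) (hvC : ∀ n, ‖v n‖ ≤ Cv) (haC : ∀ n, ‖a n‖ ≤ Ca) :
    v 0 ≤ ∑' n, lam ^ n * a n := by
  have hlim := (summable_pow_mul_of_norm_le hlam0 hlam1 haC).hasSum.tendsto_sum_nat.add
    (tendsto_pow_mul_of_norm_le hlam0 hlam1 hvC)
  rw [add_zero] at hlim
  exact ge_of_tendsto hlim (.of_forall (le_sum_range_add_pow_mul hlam0 hv))

lemma eq_tsum_of_eq_discounted (hlam0 : 0 ≤ lam) (hlam1 : lam < 1) {Cv Ca : ℝ}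
    (hv : ∀ n, v n = lam * v (n + 1) + a n) (hvC : ∀ n, ‖v n‖ ≤ Cv) (haC : ∀ n, ‖a n‖ ≤ Ca) :
    v 0 = ∑' n, lam ^ n * a n := by
  refine le_antisymm (le_tsum_of_le_discounted hlam0 hlam1 (hv · |>.le) hvC haC) ?_
  have hneg := le_tsum_of_le_discounted (v := -v) (a := -a) hlam0 hlam1
    (fun n => by simp only [Pi.neg_apply, hv n]; linarith) (by simpa using hvC) (by simpa using haC)
  simp only [Pi.neg_apply, mul_neg, tsum_neg] at hneg
  linarith

end Discounted

section Bellman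

variable {M : Type*} [TopologicalSpace M] [CompactSpace M] {c : M × M → ℝ} {lam β : ℝ}
  {u : C(M, ℝ)}

lemma le_bellman (hc : Continuous c)
    (hu : ∀ x : M, u x = (⨅ y : M, (lam * u y + c (y, x))) + β) (z w : M) :
    u z ≤ lam * u w + (c (w, z) + β) := by
  have hbdd : BddBelow (Set.range fun y => lam * u y + c (y, z)) :=
    (isCompact_range (by fun_prop)).bddBelow
  rw [hu z]
  linarith [ciInf_le hbdd w]

lemma exists_eq_bellman (hc : Continuous c)
    (hu : ∀ x : M, u x = (⨅ y : M, (lam * u y + c (y, x))) + β) (z : M) :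
    ∃ y, u z = lam * u y + (c (y, z) + β) := by
  obtain ⟨y, -, hy⟩ := isCompact_univ.exists_isMinOn ⟨z, Set.mem_univ z⟩
    (Continuous.continuousOn (f := fun w => lam * u w + c (w, z)) (by fun_prop))
  have : Nonempty M := ⟨z⟩
  have hmin : lam * u y + c (y, z) ≤ ⨅ w : M, (lam * u w + c (w, z)) :=
    le_ciInf fun w => hy (Set.mem_univ w)
  refine ⟨y, le_antisymm (le_bellman hc hu z y) ?_⟩
  rw [hu z]
  linarith

end Bellman

theorem discounted_representation_formula_general
    {M : Type*} [MetricSpace M] [CompactSpace M]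
    (c : M × M → ℝ) (hc : Continuous c)
    (lam : ℝ) (hlam0 : 0 < lam) (hlam1 : lam < 1) (β : ℝ)
    (u : C(M, ℝ))
    (hu : ∀ x : M, u x = (⨅ y : M, (lam * u y + c (y, x))) + β)
    (x : M) :
    ∃ p : ℕ → M, p 0 = x ∧
      u x = ∑' n : ℕ, lam ^ n * (c (p (n + 1), p n) + β) ∧
      ∀ q : ℕ → M, q 0 = x →
        u x ≤ ∑' n : ℕ, lam ^ n * (c (q (n + 1), q n) + β) := by
  choose Y hY using exists_eq_bellman hc hu
  have hcost (q : ℕ → M) (n : ℕ) : ‖c (q (n + 1), q n) + β‖ ≤ ‖(⟨c, hc⟩ : C(M × M, ℝ))‖ + ‖β‖ :=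
    (norm_add_le _ _).trans (add_le_add_left ((⟨c, hc⟩ : C(M × M, ℝ)).norm_coe_le_norm _) _)
  refine ⟨fun n => Y^[n] x, rfl, ?_, fun q hq0 => ?_⟩
  · refine eq_tsum_of_eq_discounted (v := fun n => u (Y^[n] x)) hlam0.le hlam1 (fun n => ?_)
      (fun n => u.norm_coe_le_norm _) (hcost fun n => Y^[n] x)
    simp only [Function.iterate_succ_apply']
    exact hY _
  · rw [← hq0]
    exact le_tsum_of_le_discounted (v := fun n => u (q n)) hlam0.le hlam1
      (fun n => le_bellman hc hu _ _) (fun n => u.norm_coe_le_norm _) (hcost q)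

/-- Representation formula for the solution of the discounted equation:
the value `u_λ x` is the minimum over backward sequences starting at `x` of the
discounted total cost, and the minimum is attained. -/
theorem discounted_representation_formula
    {M : Type*} [MetricSpace M] [CompactSpace M] [Nonempty M]
    (c : M × M → ℝ) (hc : Continuous c)
    (lam : ℝ) (hlam0 : 0 < lam) (hlam1 : lam < 1) (β : ℝ)
    (u : C(M, ℝ))
    (hu : ∀ x : M, u x = (⨅ y : M, (lam * u y + c (y, x))) + β)
    (x : M) :
    ∃ p : ℕ → M, p 0 = x ∧
      u x = ∑' n : ℕ, lam ^ n * (c (p (n + 1), p n) + β) ∧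
      ∀ q : ℕ → M, q 0 = x →
        u x ≤ ∑' n : ℕ, lam ^ n * (c (q (n + 1), q n) + β) :=
  discounted_representation_formula_general c hc lam hlam0 hlam1 β u hu x
end

section
/- If for each λ the sequence x̄^λ realizes the minimum in the representation formula u_λ(x_0^λ) = Σ λⁿ c(x^λ_{-n-1}, x^λ_{-n}) (with critical value normalized to 0), then any weak-* limit μ̃ of μ̃^λ_{x̄^λ} as λ → 1⁻ satisfies ∫_{M×M} c dμ̃ = 0, i.e. μ̃ is a Mather measure. -/
/-!
If `v` solves the critical equation, comparing it with the discounted one gives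
`|u_λ - v| ≤ λ ‖u_λ - v‖ + (1 - λ) ‖v‖` pointwise, hence `‖u_λ‖ ≤ 2 ‖v‖` uniformly in `λ`.
Along a minimizing backward orbit the integral of `c` against `μ̃^λ` is exactly
`(1 - λ) u_λ(x₀)`, which therefore tends to `0`; weak-* convergence tested on the continuous
function `c` turns this into `∫ c dμ̃ = 0`.
-/

open MeasureTheory Filter Topology
open scoped BoundedContinuousFunction

/-- The discounted occupation measure `μ̃^λ_{x̄} = (1-λ) ∑ λⁿ δ_{(x_{-n-1}, x_{-n})}`. -/
noncomputable def discountedOccupation {M : Type*} [MeasurableSpace M]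
    (lam : ℝ) (p : ℕ → M) : Measure (M × M) :=
  Measure.sum fun n : ℕ =>
    (ENNReal.ofReal ((1 - lam) * lam ^ n)) • Measure.dirac (p (n + 1), p n)

section DiscountedOccupation

variable {M : Type*} [MeasurableSpace M] {lam : ℝ}

theorem isProbabilityMeasure_discountedOccupation (h0 : 0 ≤ lam) (h1 : lam < 1) (p : ℕ → M) :
    IsProbabilityMeasure (discountedOccupation lam p) := by
  constructor
  have hnonneg : ∀ n : ℕ, 0 ≤ (1 - lam) * lam ^ n := fun n =>
    mul_nonneg (by linarith) (pow_nonneg h0 n)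
  have hsum : Summable fun n : ℕ => (1 - lam) * lam ^ n :=
    (summable_geometric_of_lt_one h0 h1).mul_left _
  rw [discountedOccupation, Measure.sum_apply _ MeasurableSet.univ]
  simp only [Measure.smul_apply, Measure.dirac_apply_of_mem (Set.mem_univ _), smul_eq_mul,
    mul_one]
  rw [← ENNReal.ofReal_tsum_of_nonneg hnonneg hsum, tsum_mul_left,
    tsum_geometric_of_lt_one h0 h1, mul_inv_cancel₀ (by linarith), ENNReal.ofReal_one]

theorem integral_discountedOccupation [TopologicalSpace M] [OpensMeasurableSpace (M × M)]
    (h0 : 0 ≤ lam) (h1 : lam < 1) (p : ℕ → M) (f : M × M →ᵇ ℝ) :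
    ∫ z, f z ∂(discountedOccupation lam p) =
      ∑' n : ℕ, (1 - lam) * lam ^ n * f (p (n + 1), p n) := by
  have := isProbabilityMeasure_discountedOccupation h0 h1 p
  have hf := f.integrable (discountedOccupation lam p)
  rw [discountedOccupation] at hf ⊢
  rw [integral_sum_measure hf]
  congr 1 with n
  rw [integral_smul_measure, integral_dirac' _ _ f.continuous.stronglyMeasurable,
    ENNReal.toReal_ofReal (mul_nonneg (by linarith) (pow_nonneg h0 n)), smul_eq_mul]

end DiscountedOccupation

theorem abs_ciInf_sub_ciInf_le {ι : Type*} [Nonempty ι] {f g : ι → ℝ} {K : ℝ}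
    (hf : BddBelow (Set.range f)) (hg : BddBelow (Set.range g)) (h : ∀ i, |f i - g i| ≤ K) :
    |(⨅ i, f i) - ⨅ i, g i| ≤ K := by
  rw [abs_sub_le_iff]
  constructor
  · have : (⨅ i, f i) - K ≤ ⨅ i, g i := le_ciInf fun i => by
      linarith [ciInf_le hf i, (abs_le.mp (h i)).2]
    linarith
  · have : (⨅ i, g i) - K ≤ ⨅ i, f i := le_ciInf fun i => by
      linarith [ciInf_le hg i, (abs_le.mp (h i)).1]
    linarith

theorem norm_le_two_mul_of_discounted_solution {M : Type*} [TopologicalSpace M]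
    [CompactSpace M] {c : M × M → ℝ} (hc : Continuous c) {v u : C(M, ℝ)} {lam : ℝ}
    (hl0 : 0 ≤ lam) (hl1 : lam < 1)
    (hv : ∀ x : M, v x = ⨅ y : M, (v y + c (y, x)))
    (hu : ∀ x : M, u x = ⨅ y : M, (lam * u y + c (y, x))) :
    ‖u‖ ≤ 2 * ‖v‖ := by
  set K := lam * ‖u - v‖ + (1 - lam) * ‖v‖
  have hK : 0 ≤ K := by positivity
  have hscaled : ∀ y : M, |lam * u y - v y| ≤ K := fun y => calc
    |lam * u y - v y| = |lam * (u - v) y + (lam - 1) * v y| := by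
      rw [ContinuousMap.sub_apply]; ring_nf
    _ ≤ lam * ‖u - v‖ + (1 - lam) * ‖v‖ := by
      refine (abs_add_le _ _).trans (add_le_add ?_ ?_)
      · rw [abs_mul, abs_of_nonneg hl0]
        exact mul_le_mul_of_nonneg_left ((u - v).norm_coe_le_norm y) hl0
      · rw [abs_mul, abs_of_nonpos (by linarith : lam - 1 ≤ 0), neg_sub]
        exact mul_le_mul_of_nonneg_left (v.norm_coe_le_norm y) (by linarith)
  have hpointwise : ∀ x : M, |u x - v x| ≤ K := fun x => by
    have : Nonempty M := ⟨x⟩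
    rw [hu x, hv x]
    exact abs_ciInf_sub_ciInf_le (isCompact_range (by fun_prop)).bddBelow
      (isCompact_range (by fun_prop)).bddBelow fun y => by
        rw [add_sub_add_right_eq_sub]; exact hscaled y
  have hdist : ‖u - v‖ ≤ ‖v‖ := by
    have : ‖u - v‖ ≤ K := (ContinuousMap.norm_le _ hK).mpr hpointwise
    nlinarith [norm_nonneg (u - v)]
  calc ‖u‖ = ‖(u - v) + v‖ := by rw [sub_add_cancel]
    _ ≤ ‖u - v‖ + ‖v‖ := norm_add_le _ _
    _ ≤ 2 * ‖v‖ := by linarith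

theorem limit_of_minimizing_discountedOccupation_isMather_general
    {M : Type*} [MetricSpace M] [CompactSpace M]
    [MeasurableSpace M] [BorelSpace M]
    (c : M × M → ℝ) (hc : Continuous c)
    (hcrit : ∃ v : C(M, ℝ), ∀ x : M, v x = ⨅ y : M, (v y + c (y, x)))
    (us : ℝ → C(M, ℝ))
    (hus : ∀ lam : ℝ, 0 < lam → lam < 1 →
      ∀ x : M, us lam x = ⨅ y : M, (lam * us lam y + c (y, x)))
    (p : ℝ → ℕ → M)
    (hmin : ∀ lam : ℝ, 0 < lam → lam < 1 →
      (us lam (p lam 0) = ∑' n : ℕ, lam ^ n * c (p lam (n + 1), p lam n)) ∧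
      ∀ q : ℕ → M, q 0 = p lam 0 →
        us lam (p lam 0) ≤ ∑' n : ℕ, lam ^ n * c (q (n + 1), q n))
    (μt : Measure (M × M))
    (lams : ℕ → ℝ) (h0 : ∀ i, 0 < lams i) (h1 : ∀ i, lams i < 1)
    (hlims : Tendsto lams atTop (𝓝 1))
    (hconv : ∀ f : C(M × M, ℝ),
      Tendsto (fun i => ∫ z, f z ∂(discountedOccupation (lams i) (p (lams i))))
        atTop (𝓝 (∫ z, f z ∂μt))) :
    ∫ z, c z ∂μt = 0 := by
  obtain ⟨v, hv⟩ := hcrit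
  have hintegral : ∀ i, ∫ z, c z ∂(discountedOccupation (lams i) (p (lams i)))
      = (1 - lams i) * us (lams i) (p (lams i) 0) := fun i => by
    rw [(hmin (lams i) (h0 i) (h1 i)).1, ← tsum_mul_left]
    simp only [← mul_assoc]
    exact integral_discountedOccupation (h0 i).le (h1 i) _ (.mkOfCompact ⟨c, hc⟩)
  have hbounded : IsBoundedUnder (· ≤ ·) atTop fun i => ‖us (lams i) (p (lams i) 0)‖ :=
    isBoundedUnder_of ⟨2 * ‖v‖, fun i => ((us (lams i)).norm_coe_le_norm _).trans <|
      norm_le_two_mul_of_discounted_solution hc (h0 i).le (h1 i) hv (hus (lams i) (h0 i) (h1 i))⟩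
  have hvanish : Tendsto (fun i => (1 - lams i) * us (lams i) (p (lams i) 0)) atTop (𝓝 0) := by
    refine Tendsto.zero_mul_isBoundedUnder_le ?_ hbounded
    simpa using hlims.const_sub 1
  have hlimit := hconv ⟨c, hc⟩
  simp only [ContinuousMap.coe_mk, hintegral] at hlimit
  exact tendsto_nhds_unique hlimit hvanish

/-- If each backward sequence `x̄^λ` realizes the minimum in the representation formula
for the solution `u_λ` of `u_λ = T_λ u_λ` (critical value normalized to `0`), then any
weak-* limit `μ̃` of the occupation measures `μ̃^λ_{x̄^λ}` as `λ → 1⁻` satisfies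
`∫ c dμ̃ = 0`, i.e. `μ̃` is a Mather measure. -/
theorem limit_of_minimizing_discountedOccupation_isMather
    {M : Type*} [MetricSpace M] [CompactSpace M] [Nonempty M]
    [MeasurableSpace M] [BorelSpace M]
    (c : M × M → ℝ) (hc : Continuous c)
    (hcrit : ∃ v : C(M, ℝ), ∀ x : M, v x = ⨅ y : M, (v y + c (y, x)))
    (us : ℝ → C(M, ℝ))
    (hus : ∀ lam : ℝ, 0 < lam → lam < 1 →
      ∀ x : M, us lam x = ⨅ y : M, (lam * us lam y + c (y, x)))
    (p : ℝ → ℕ → M)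
    (hmin : ∀ lam : ℝ, 0 < lam → lam < 1 →
      (us lam (p lam 0) = ∑' n : ℕ, lam ^ n * c (p lam (n + 1), p lam n)) ∧
      ∀ q : ℕ → M, q 0 = p lam 0 →
        us lam (p lam 0) ≤ ∑' n : ℕ, lam ^ n * c (q (n + 1), q n))
    (μt : Measure (M × M)) [IsProbabilityMeasure μt]
    (lams : ℕ → ℝ) (h0 : ∀ i, 0 < lams i) (h1 : ∀ i, lams i < 1)
    (hlims : Tendsto lams atTop (𝓝 1))
    (hconv : ∀ f : C(M × M, ℝ),
      Tendsto (fun i => ∫ z, f z ∂(discountedOccupation (lams i) (p (lams i))))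
        atTop (𝓝 (∫ z, f z ∂μt))) :
    ∫ z, c z ∂μt = 0 :=
  limit_of_minimizing_discountedOccupation_isMather_general c hc hcrit us hus p hmin μt lams h0 h1
    hlims hconv
end
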